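/- arXiv:1804.03374 — 3 statements merged into one kernel-verified Lean document; each statement's English description precedes it below -/
import Mathlib

section
/- For m > 2 and any bounded continuous g : ℝ^d → ℝ, the identity ∫_0^∞ s · P_s g(x) σ_m(s,t) ds = (t²/(2(m−2))) Q_t^{(m−2)}g(x) holds, where P_s is the heat semigroup on ℝ^d and σ_m(s,t) is the Bessel hitting-time density. -/
open MeasureTheory

/-- The heat semigroup on `ℝ^d`:
`P_s g(x) = ∫ g(y) exp(−|x−y|²/(4s)) (4πs)^{−d/2} dy`. -/
noncomputable def heatOp (d : ℕ) (s : ℝ) (g : EuclideanSpace ℝ (Fin d) → ℝ)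
    (x : EuclideanSpace ℝ (Fin d)) : ℝ :=
  ∫ y : EuclideanSpace ℝ (Fin d),
    g y * Real.exp (-‖x - y‖ ^ 2 / (4 * s)) / (4 * Real.pi * s) ^ ((d : ℝ) / 2)

/-- The Bessel hitting-time density
`σ_m(s,t) = (1/(2^m Γ(m/2))) t^m exp(−t²/(4s)) s^{−m/2−1}`. -/
noncomputable def besselHittingDensity (m t s : ℝ) : ℝ :=
  (1 / (2 ^ m * Real.Gamma (m / 2))) * t ^ m * Real.exp (-t ^ 2 / (4 * s)) *
    s ^ (-m / 2 - 1)

lemma bessel_moment_id (m t s : ℝ) (hm : 2 < m) (ht : 0 < t) (hs : 0 < s) :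
    s * besselHittingDensity m t s =
      t ^ 2 / (2 * (m - 2)) * besselHittingDensity (m - 2) t s := by
  unfold besselHittingDensity
  have h1 : Real.Gamma (m / 2) = (m / 2 - 1) * Real.Gamma (m / 2 - 1) := by
    have := Real.Gamma_add_one (s := m / 2 - 1) (by nlinarith)
    rw [show m / 2 - 1 + 1 = m / 2 by ring] at this
    rw [this]
  have h2 : (2 : ℝ) ^ m = 2 ^ (m - 2) * 4 := by
    rw [show (4:ℝ) = 2 ^ ((2:ℕ):ℝ) by rw [Real.rpow_natCast]; norm_num,
      ← Real.rpow_add (by norm_num : (0:ℝ) < 2)]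
    norm_num
  have h3 : t ^ m = t ^ (m - 2) * t ^ (2 : ℕ) := by
    rw [← Real.rpow_natCast t 2, ← Real.rpow_add ht]
    norm_num
  have h4 : s * s ^ (-m / 2 - 1) = s ^ (-(m - 2) / 2 - 1) := by
    rw [show s * s ^ (-m / 2 - 1) = s ^ (1 : ℝ) * s ^ (-m / 2 - 1) by
      rw [Real.rpow_one], ← Real.rpow_add hs]
    ring_nf
  have hG : Real.Gamma (m / 2 - 1) ≠ 0 :=
    (Real.Gamma_pos_of_pos (by nlinarith)).ne'
  have h2m : (0:ℝ) < 2 ^ (m - 2) := Real.rpow_pos_of_pos (by norm_num) _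
  have hMm : m - 2 ≠ 0 := by nlinarith
  calc s * ((1 / (2 ^ m * Real.Gamma (m / 2))) * t ^ m *
        Real.exp (-t ^ 2 / (4 * s)) * s ^ (-m / 2 - 1))
      = (1 / (2 ^ m * Real.Gamma (m / 2))) * t ^ m *
        Real.exp (-t ^ 2 / (4 * s)) * (s * s ^ (-m / 2 - 1)) := by ring
    _ = t ^ 2 / (2 * (m - 2)) *
        ((1 / (2 ^ (m - 2) * Real.Gamma ((m - 2) / 2))) * t ^ (m - 2) *
          Real.exp (-t ^ 2 / (4 * s)) * s ^ (-(m - 2) / 2 - 1)) := by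
        rw [h4, h1, h2, h3, show (m - 2) / 2 = m / 2 - 1 by ring]
        have hB : (2:ℝ) ^ (m - 2) ≠ 0 := (Real.rpow_pos_of_pos (by norm_num) _).ne'
        field_simp
        ring_nf

/-- For `m > 2`, `t > 0`, and bounded continuous `g`:
`∫_0^∞ s P_s g(x) σ_m(s,t) ds = (t²/(2(m−2))) Q_t^{(m−2)} g(x)`, where
`Q_t^{(m−2)} g(x) = ∫_0^∞ P_s g(x) σ_{m−2}(s,t) ds`. -/
theorem first_moment_subordination (d : ℕ) (hd : 1 ≤ d) (m t : ℝ) (hm : 2 < m)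
    (ht : 0 < t) (g : EuclideanSpace ℝ (Fin d) → ℝ) (hg : Continuous g)
    (hb : ∃ C, ∀ y, |g y| ≤ C) (x : EuclideanSpace ℝ (Fin d)) :
    ∫ s in Set.Ioi (0 : ℝ), s * heatOp d s g x * besselHittingDensity m t s =
      t ^ 2 / (2 * (m - 2)) *
        ∫ s in Set.Ioi (0 : ℝ), heatOp d s g x * besselHittingDensity (m - 2) t s := by
  rw [← MeasureTheory.integral_const_mul]
  apply MeasureTheory.setIntegral_congr_fun measurableSet_Ioi
  intro s hs
  have h := bessel_moment_id m t s hm ht hs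
  calc s * heatOp d s g x * besselHittingDensity m t s
      = heatOp d s g x * (s * besselHittingDensity m t s) := by ring
    _ = heatOp d s g x * (t ^ 2 / (2 * (m - 2)) * besselHittingDensity (m - 2) t s) := by
        rw [h]
    _ = t ^ 2 / (2 * (m - 2)) * (heatOp d s g x * besselHittingDensity (m - 2) t s) := by
        ring
end

section
/- More generally, for m > 0, 0 < p < m/2, and bounded continuous g, ∫_0^∞ s^p P_s g(x) σ_m(s,t) ds = t^{2p} · (Γ(m/2 − p)/(4^p Γ(m/2))) · Q_t^{(m−2p)}g(x). -/
open MeasureTheory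

/-- For `m > 0`, `0 < p < m/2`, `t > 0` and bounded continuous `g`:
`∫_0^∞ s^p P_s g(x) σ_m(s,t) ds = t^{2p} (Γ(m/2−p)/(4^p Γ(m/2))) Q_t^{(m−2p)} g(x)`,
where `Q_t^{(m−2p)} g(x) = ∫_0^∞ P_s g(x) σ_{m−2p}(s,t) ds`. -/
theorem moment_subordination (d : ℕ) (hd : 1 ≤ d) (m p t : ℝ) (hm : 0 < m)
    (hp : 0 < p) (hpm : p < m / 2) (ht : 0 < t)
    (g : EuclideanSpace ℝ (Fin d) → ℝ) (hg : Continuous g) (hb : ∃ C, ∀ y, |g y| ≤ C)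
    (x : EuclideanSpace ℝ (Fin d)) :
    ∫ s in Set.Ioi (0 : ℝ), s ^ p * heatOp d s g x * besselHittingDensity m t s =
      t ^ (2 * p) * (Real.Gamma (m / 2 - p) / (4 ^ p * Real.Gamma (m / 2))) *
        ∫ s in Set.Ioi (0 : ℝ),
          heatOp d s g x * besselHittingDensity (m - 2 * p) t s := by
  rw [← integral_const_mul]
  refine setIntegral_congr_fun measurableSet_Ioi fun s hs => ?_
  simp only [Set.mem_Ioi] at hs
  have hG1 : Real.Gamma (m / 2) ≠ 0 := (Real.Gamma_pos_of_pos (by linarith)).ne'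
  have hG2 : Real.Gamma (m / 2 - p) ≠ 0 := (Real.Gamma_pos_of_pos (by linarith)).ne'
  have h4 : (4 : ℝ) ^ p = 2 ^ (2 * p) := by
    rw [Real.rpow_mul (by norm_num : (0:ℝ) ≤ 2)]; norm_num
  have hGamma : Real.Gamma ((m - 2 * p) / 2) = Real.Gamma (m / 2 - p) := by ring_nf
  have key : s ^ p * besselHittingDensity m t s =
      t ^ (2 * p) * (Real.Gamma (m / 2 - p) / (4 ^ p * Real.Gamma (m / 2))) *
        besselHittingDensity (m - 2 * p) t s := by
    unfold besselHittingDensity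
    rw [hGamma, show -(m - 2 * p) / 2 - 1 = p + (-m / 2 - 1) by ring, Real.rpow_add hs,
      show m - 2 * p = -(2 * p) + m by ring, Real.rpow_add ht,
      Real.rpow_add (show (0:ℝ) < 2 by norm_num), h4,
      Real.rpow_neg (by norm_num : (0:ℝ) ≤ 2), Real.rpow_neg ht.le]
    have h2pos : (0:ℝ) < 2 ^ (2 * p) := Real.rpow_pos_of_pos (by norm_num) _
    have htpos : (0:ℝ) < t ^ (2 * p) := Real.rpow_pos_of_pos ht _
    have h2mpos : (0:ℝ) < 2 ^ m := Real.rpow_pos_of_pos (by norm_num) _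
    set A := t ^ (2 * p) with hA
    set B := (2:ℝ) ^ (2 * p) with hB
    set C := (2:ℝ) ^ m with hC
    set G1 := Real.Gamma (m / 2) with hG1'
    set G2 := Real.Gamma (m / 2 - p) with hG2'
    field_simp
  linear_combination heatOp d s g x * key
end

section
/- In stereographic coordinates, with ρ(x) = √(1+|x|²) and u = (1−|x|²)/(1+|x|²), one has Δ_𝕊(log ρ) = (1 + u(d−1))/(2(1+u)) and Γ_𝕊(log ρ) = (1−u)/(4(1+u)). -/
/-- The Euclidean Laplacian `Δf(x) = Σ_i ∂²_{ii} f(x)` on `ℝ^d`. -/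
noncomputable def euclLap (d : ℕ) (f : EuclideanSpace ℝ (Fin d) → ℝ)
    (x : EuclideanSpace ℝ (Fin d)) : ℝ :=
  ∑ i : Fin d,
    fderiv ℝ (fun z => fderiv ℝ f z (EuclideanSpace.single i 1)) x
      (EuclideanSpace.single i 1)

/-- `u(x) = (1−|x|²)/(1+|x|²)`. -/
noncomputable def stereoU (d : ℕ) (x : EuclideanSpace ℝ (Fin d)) : ℝ :=
  (1 - ‖x‖ ^ 2) / (1 + ‖x‖ ^ 2)

/-- `log ρ(x) = log √(1+|x|²)`. -/
noncomputable def logRho (d : ℕ) (x : EuclideanSpace ℝ (Fin d)) : ℝ :=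
  Real.log (Real.sqrt (1 + ‖x‖ ^ 2))

lemma hasFDerivAt_one_add_normsq (d : ℕ) (y : EuclideanSpace ℝ (Fin d)) :
    HasFDerivAt (fun z : EuclideanSpace ℝ (Fin d) => 1 + ‖z‖ ^ 2)
      (2 • innerSL ℝ y) y := by
  exact (hasStrictFDerivAt_norm_sq y).hasFDerivAt.const_add 1

lemma hasFDerivAt_logRho (d : ℕ) (y : EuclideanSpace ℝ (Fin d)) :
    HasFDerivAt (logRho d) ((1 + ‖y‖ ^ 2)⁻¹ • innerSL ℝ y) y := by
  have hpos : (0 : ℝ) < 1 + ‖y‖ ^ 2 := by positivity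
  have hrw : logRho d = fun z : EuclideanSpace ℝ (Fin d) =>
      2⁻¹ * Real.log (1 + ‖z‖ ^ 2) := by
    funext z
    rw [logRho, Real.log_sqrt (by positivity)]; ring
  rw [hrw]
  have h := ((hasFDerivAt_one_add_normsq d y).log hpos.ne').const_mul (2⁻¹ : ℝ)
  refine h.congr_fderiv ?_
  ext v
  simp only [ContinuousLinearMap.coe_smul', Pi.smul_apply,
    ContinuousLinearMap.smul_apply, smul_eq_mul, two_smul, ContinuousLinearMap.add_apply]
  ring

lemma fderiv_logRho_apply (d : ℕ) (z : EuclideanSpace ℝ (Fin d)) (i : Fin d) :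
    fderiv ℝ (logRho d) z (EuclideanSpace.single i 1) = z i * (1 + ‖z‖ ^ 2)⁻¹ := by
  rw [(hasFDerivAt_logRho d z).fderiv]
  simp [real_inner_comm, EuclideanSpace.inner_single_left, EuclideanSpace.inner_single_right, mul_comm]

/-- In stereographic coordinates, with `ρ(x) = √(1+|x|²)` and
`u = (1−|x|²)/(1+|x|²)`, one has `Δ_𝕊(log ρ) = (1 + u(d−1))/(2(1+u))` and
`Γ_𝕊(log ρ) = (1−u)/(4(1+u))`, where
`Δ_𝕊 = ((1+|x|²)²/4)Δ − ((d−2)/2)(1+|x|²) Σ_i x_i ∂_i` and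
`Γ_𝕊(f) = ((1+|x|²)²/4)|∇f|²`. -/
theorem logRho_formulas (d : ℕ) (hd : 2 ≤ d) (x : EuclideanSpace ℝ (Fin d)) :
    ((1 + ‖x‖ ^ 2) ^ 2 / 4 * euclLap d (logRho d) x -
        (d - 2 : ℝ) / 2 * (1 + ‖x‖ ^ 2) *
          ∑ i : Fin d, x i * fderiv ℝ (logRho d) x (EuclideanSpace.single i 1) =
        (1 + stereoU d x * (d - 1)) / (2 * (1 + stereoU d x))) ∧
      (1 + ‖x‖ ^ 2) ^ 2 / 4 * ‖gradient (logRho d) x‖ ^ 2 =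
        (1 - stereoU d x) / (4 * (1 + stereoU d x)) := by
  have hpos : (0 : ℝ) < 1 + ‖x‖ ^ 2 := by positivity
  have hne : (1 + ‖x‖ ^ 2) ≠ 0 := hpos.ne'
  have hsum_sq : ∑ i : Fin d, x i * x i = ‖x‖ ^ 2 := by
    rw [← real_inner_self_eq_norm_sq]
    simp [PiLp.inner_apply]
    rw [EuclideanSpace.norm_sq_eq]
    simp [Real.norm_eq_abs, sq_abs, sq]
  -- second derivatives
  have hsecond : ∀ i : Fin d,
      fderiv ℝ (fun z => fderiv ℝ (logRho d) z (EuclideanSpace.single i 1)) x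
        (EuclideanSpace.single i 1)
      = (1 + ‖x‖ ^ 2)⁻¹ - x i * x i * (2 * ((1 + ‖x‖ ^ 2) ^ 2)⁻¹) := by
    intro i
    have hrw : (fun z : EuclideanSpace ℝ (Fin d) =>
        fderiv ℝ (logRho d) z (EuclideanSpace.single i 1))
        = fun z => z i * (1 + ‖z‖ ^ 2)⁻¹ := by
      funext z; exact fderiv_logRho_apply d z i
    have h1 : HasFDerivAt (fun z : EuclideanSpace ℝ (Fin d) => z i)
        (EuclideanSpace.proj (𝕜 := ℝ) i) x := PiLp.hasFDerivAt_apply 2 x i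
    have hinv : HasFDerivAt (fun z : EuclideanSpace ℝ (Fin d) => (1 + ‖z‖ ^ 2)⁻¹)
        ((-((1 + ‖x‖ ^ 2) ^ 2)⁻¹) • (2 • innerSL ℝ x)) x := by
      simpa [Function.comp_def] using
        (hasDerivAt_inv hne).comp_hasFDerivAt x (hasFDerivAt_one_add_normsq d x)
    have hmul : HasFDerivAt (fun z : EuclideanSpace ℝ (Fin d) => z i * (1 + ‖z‖ ^ 2)⁻¹) _ x :=
      h1.mul hinv
    rw [hrw, hmul.fderiv]
    simp [EuclideanSpace.inner_single_right, real_inner_comm, two_smul,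
      EuclideanSpace.single_apply]
    ring
  -- Laplacian
  have hlap : euclLap d (logRho d) x
      = d * (1 + ‖x‖ ^ 2)⁻¹ - ‖x‖ ^ 2 * (2 * ((1 + ‖x‖ ^ 2) ^ 2)⁻¹) := by
    rw [euclLap, Finset.sum_congr rfl fun i _ => hsecond i, Finset.sum_sub_distrib,
      Finset.sum_const, Finset.card_univ, Fintype.card_fin, ← Finset.sum_mul, hsum_sq]
    simp [nsmul_eq_mul]
  -- first order term
  have hfirst : ∑ i : Fin d, x i * fderiv ℝ (logRho d) x (EuclideanSpace.single i 1)
      = ‖x‖ ^ 2 * (1 + ‖x‖ ^ 2)⁻¹ := by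
    have hterm : ∀ i : Fin d, x i * fderiv ℝ (logRho d) x (EuclideanSpace.single i 1)
        = x i * x i * (1 + ‖x‖ ^ 2)⁻¹ := fun i => by rw [fderiv_logRho_apply]; ring
    rw [Finset.sum_congr rfl fun i _ => hterm i, ← Finset.sum_mul, hsum_sq]
  -- gradient
  have hgrad : gradient (logRho d) x = (1 + ‖x‖ ^ 2)⁻¹ • x := by
    have h := (hasFDerivAt_logRho d x).hasGradientAt
    rw [h.gradient]
    have heq : ((1 + ‖x‖ ^ 2)⁻¹ • innerSL ℝ x)
        = (InnerProductSpace.toDual ℝ _) ((1 + ‖x‖ ^ 2)⁻¹ • x) := by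
      ext v
      simp [InnerProductSpace.toDual_apply_apply, real_inner_smul_left]
    rw [heq, LinearIsometryEquiv.symm_apply_apply]
  have hgradnorm : ‖gradient (logRho d) x‖ ^ 2 = ((1 + ‖x‖ ^ 2)⁻¹) ^ 2 * ‖x‖ ^ 2 := by
    rw [hgrad, norm_smul]
    simp [mul_pow, abs_of_pos (inv_pos.mpr hpos)]
  have hu1 : 1 + stereoU d x = 2 / (1 + ‖x‖ ^ 2) := by
    rw [stereoU]; field_simp; ring
  have hu2 : 1 - stereoU d x = 2 * ‖x‖ ^ 2 / (1 + ‖x‖ ^ 2) := by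
    rw [stereoU]; field_simp; ring
  constructor
  · rw [hlap, hfirst, hu1, stereoU]
    field_simp
    ring
  · rw [hgradnorm, hu1, hu2]
    field_simp
end
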